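/- For every τ ∈ ℍ and every ξ ∈ ℂ \ Λ_τ, the family λ ↦ (ξ + λ)^{−2} − λ^{−2}, indexed by λ ∈ Λ_τ \ {0}, is absolutely summable, and the family λ ↦ (ξ + λ)^{−1} − λ^{−1} + ξ·λ^{−2}, indexed by λ ∈ Λ_τ \ {0}, is absolutely summable. (These convergence facts make the Weierstrass ℘- and ζ-functions well defined.) -/

import Mathlib

noncomputable section

open Complex

/-- The upper half-plane as a subset of ℂ. -/
def UHP : Set ℂ := {τ : ℂ | 0 < τ.im}

/-- The lattice Λ_τ = ℤτ + ℤ. -/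
def LatticeSet (τ : ℂ) : Set ℂ := {z : ℂ | ∃ m n : ℤ, z = m * τ + n}

/-- r(τ) = min of |λ| over nonzero lattice points. -/
def rmin (τ : ℂ) : ℝ := sInf ((fun z : ℂ => ‖z‖) '' (LatticeSet τ \ {0}))

/-- The Eisenstein series e_k(τ). -/
def ek (k : ℕ) (τ : ℂ) : ℂ :=
  ∑' p : {p : ℤ × ℤ // p ≠ 0}, (((p.1.1 : ℂ) * τ + (p.1.2 : ℂ)) ^ k)⁻¹

/-- The normalized Eisenstein series G_k(τ). -/
def Gk (k : ℕ) (τ : ℂ) : ℂ :=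
  if k = 2 then
    -(1 / 24) + ∑' n : ℕ, (∑ d ∈ Nat.divisors n, (d : ℂ)) *
      Complex.exp (2 * Real.pi * Complex.I * n * τ)
  else if Even k ∧ 4 ≤ k then
    (Nat.factorial (k - 1) : ℂ) / (2 * (2 * Real.pi * Complex.I) ^ k) * ek k τ
  else 0

/-- The Eisenstein elliptic function E_k(ξ,τ), k ≥ 3. -/
def Ek (k : ℕ) (ξ τ : ℂ) : ℂ :=
  ∑' p : ℤ × ℤ, ((ξ + (p.1 : ℂ) * τ + (p.2 : ℂ)) ^ k)⁻¹

/-- The Weierstrass ℘-function. -/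
def wp (τ ξ : ℂ) : ℂ :=
  (ξ ^ 2)⁻¹ + ∑' l : ↥(LatticeSet τ \ {0}), (((ξ + (l : ℂ)) ^ 2)⁻¹ - ((l : ℂ) ^ 2)⁻¹)

/-- The Weierstrass zeta function. -/
def wzeta (τ ξ : ℂ) : ℂ :=
  ξ⁻¹ + ∑' l : ↥(LatticeSet τ \ {0}), ((ξ + (l : ℂ))⁻¹ - ((l : ℂ))⁻¹ + ξ * (((l : ℂ)) ^ 2)⁻¹)

/-- P_k(ξ,τ): for k = 2 via ℘, otherwise via E_k. -/
def Pk (k : ℕ) (ξ τ : ℂ) : ℂ :=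
  if k = 2 then ((2 * Real.pi * Complex.I) ^ 2)⁻¹ * wp τ ξ
  else ((2 * Real.pi * Complex.I) ^ k)⁻¹ * (Ek k ξ τ - ek k τ)

/-- E_1(ξ,τ) = ζ_τ(ξ) − 2(2πi)² G₂(τ) ξ. -/
def E1 (ξ τ : ℂ) : ℂ :=
  wzeta τ ξ - 2 * (2 * Real.pi * Complex.I) ^ 2 * Gk 2 τ * ξ

/-!
Realise `Λ_τ` as the period lattice of the pair `(τ, 1)`, a `ℤ`-lattice of rank 2 in `ℂ`, so
that `∑ ‖λ‖⁻³` converges over it. Both summands are `O(‖λ‖⁻³)` as `λ → ∞`: the `℘`-summand by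
the standard bound, the `ζ`-summand because it equals `ξ² / ((ξ + λ) λ²)`. Finitely many small
lattice points do not affect summability.
-/

open Filter Module Asymptotics

lemma ZLattice.summable_norm_of_isBigO {E F : Type*} [NormedAddCommGroup E] [NormedSpace ℝ E]
    [FiniteDimensional ℝ E] [NormedAddCommGroup F] {L : Submodule ℤ E} [DiscreteTopology L]
    {n : ℕ} (hn : finrank ℤ L < n) {f : E → F} (hf : f =O[cocompact E] fun x ↦ ‖x‖⁻¹ ^ n)
    {S : Set E} (hS : S ⊆ L) :
    Summable fun x : S ↦ ‖f x‖ := by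
  have hclosed : IsClosed (L : Set E) := AddSubgroup.isClosed_of_discrete (H := L.toAddSubgroup)
  have htendsto : Tendsto ((↑) : L → E) cofinite (cocompact E) :=
    cocompact_eq_cofinite L ▸ hclosed.isClosedEmbedding_subtypeVal.tendsto_cocompact
  have hL : Summable fun x : L ↦ ‖f x‖ :=
    summable_of_isBigO (ZLattice.summable_norm_pow_inv L n hn) (hf.norm_left.comp_tendsto htendsto)
  exact hL.comp_injective (Set.inclusion_injective hS)

lemma linearIndependent_pair_one {τ : ℂ} (hτ : τ.im ≠ 0) : LinearIndependent ℝ ![τ, 1] := by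
  refine LinearIndependent.pair_iff.mpr fun s t h ↦ ?_
  obtain rfl : s = 0 := by simpa [hτ] using congrArg Complex.im h
  simpa using h

def PeriodPair.ofImNeZero {τ : ℂ} (hτ : τ.im ≠ 0) : PeriodPair :=
  ⟨τ, 1, linearIndependent_pair_one hτ⟩

lemma PeriodPair.coe_lattice_ofImNeZero {τ : ℂ} (hτ : τ.im ≠ 0) :
    ((ofImNeZero hτ).lattice : Set ℂ) = LatticeSet τ := by
  ext x
  simp [mem_lattice, ofImNeZero, LatticeSet, eq_comm]

lemma isBigO_inv_add_sq_sub_inv_sq (ξ : ℂ) :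
    (fun l : ℂ ↦ ((ξ + l) ^ 2)⁻¹ - (l ^ 2)⁻¹) =O[cocompact ℂ] fun l ↦ ‖l‖⁻¹ ^ 3 := by
  set r := ‖ξ‖ + 1
  refine .of_bound (10 * r) ?_
  filter_upwards [tendsto_norm_cocompact_atTop.eventually_ge_atTop (2 * r)] with l hl
  have h := PeriodPair.weierstrassP_bound r (by positivity) (-ξ) (by simp [r]) l hl
  rw [show (-ξ - l) ^ 2 = (ξ + l) ^ 2 by ring] at h
  simpa [Real.rpow_neg (norm_nonneg l), inv_pow] using h

lemma norm_inv_add_sub_inv_add_mul_inv_sq_le {ξ l : ℂ} (hl : 2 * ‖ξ‖ ≤ ‖l‖) (hl0 : l ≠ 0) :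
    ‖(ξ + l)⁻¹ - l⁻¹ + ξ * (l ^ 2)⁻¹‖ ≤ 2 * ‖ξ‖ ^ 2 * ‖l‖⁻¹ ^ 3 := by
  have hhalf : ‖l‖ / 2 ≤ ‖ξ + l‖ := by
    have := norm_sub_norm_le l (-ξ)
    rw [sub_neg_eq_add, add_comm, norm_neg] at this
    linarith
  have hξl : ξ + l ≠ 0 := norm_pos_iff.mp ((by positivity : 0 < ‖l‖ / 2).trans_le hhalf)
  calc ‖(ξ + l)⁻¹ - l⁻¹ + ξ * (l ^ 2)⁻¹‖ = ‖ξ‖ ^ 2 / (‖ξ + l‖ * ‖l‖ ^ 2) := by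
        rw [show (ξ + l)⁻¹ - l⁻¹ + ξ * (l ^ 2)⁻¹ = ξ ^ 2 / ((ξ + l) * l ^ 2) by field_simp; ring]
        simp
    _ ≤ ‖ξ‖ ^ 2 / (‖l‖ / 2 * ‖l‖ ^ 2) := by gcongr
    _ = 2 * ‖ξ‖ ^ 2 * ‖l‖⁻¹ ^ 3 := by field_simp

lemma isBigO_inv_add_sub_inv_add_mul_inv_sq (ξ : ℂ) :
    (fun l : ℂ ↦ (ξ + l)⁻¹ - l⁻¹ + ξ * (l ^ 2)⁻¹) =O[cocompact ℂ] fun l ↦ ‖l‖⁻¹ ^ 3 := by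
  refine .of_bound (2 * ‖ξ‖ ^ 2) ?_
  filter_upwards [tendsto_norm_cocompact_atTop.eventually_ge_atTop (2 * ‖ξ‖ + 1)] with l hl
  have hl0 : l ≠ 0 := norm_pos_iff.mp (by linarith [norm_nonneg ξ])
  simpa using norm_inv_add_sub_inv_add_mul_inv_sq_le (by linarith) hl0

theorem wp_wzeta_summable_general (τ : ℂ) (hτ : τ ∈ UHP) (ξ : ℂ) :
    Summable (fun l : ↥(LatticeSet τ \ {0}) =>
      ‖((ξ + (l : ℂ)) ^ 2)⁻¹ - (((l : ℂ)) ^ 2)⁻¹‖) ∧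
    Summable (fun l : ↥(LatticeSet τ \ {0}) =>
      ‖(ξ + (l : ℂ))⁻¹ - ((l : ℂ))⁻¹ + ξ * (((l : ℂ)) ^ 2)⁻¹‖) := by
  have hτ' : τ.im ≠ 0 := (show 0 < τ.im from hτ).ne'
  have hS : LatticeSet τ \ {0} ⊆ (PeriodPair.ofImNeZero hτ').lattice := by
    rw [PeriodPair.coe_lattice_ofImNeZero]
    exact Set.sdiff_subset
  have hrank : finrank ℤ (PeriodPair.ofImNeZero hτ').lattice < 3 := by simp
  exact ⟨ZLattice.summable_norm_of_isBigO hrank (isBigO_inv_add_sq_sub_inv_sq ξ) hS,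
    ZLattice.summable_norm_of_isBigO hrank (isBigO_inv_add_sub_inv_add_mul_inv_sq ξ) hS⟩

/-- The defining families of the Weierstrass ℘- and ζ-functions are absolutely
summable over the nonzero lattice points. -/
theorem wp_wzeta_summable (τ : ℂ) (hτ : τ ∈ UHP) (ξ : ℂ) (hξ : ξ ∉ LatticeSet τ) :
    Summable (fun l : ↥(LatticeSet τ \ {0}) =>
      ‖((ξ + (l : ℂ)) ^ 2)⁻¹ - (((l : ℂ)) ^ 2)⁻¹‖) ∧
    Summable (fun l : ↥(LatticeSet τ \ {0}) =>
      ‖(ξ + (l : ℂ))⁻¹ - ((l : ℂ))⁻¹ + ξ * (((l : ℂ)) ^ 2)⁻¹‖) :=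
  wp_wzeta_summable_general τ hτ ξ
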